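/- Let G = (V,E) be a finite simple graph, k ≥ 1, and S ⊆ V with |S| ≤ 3k such that G − S is a cluster graph and some connected component of G − S has at least 8k vertices. Let s ∈ S be a vertex such that for every connected component C of G − S one has |N_G(s) ∩ C| < max(|C| − 4k, k+1). Then every X ⊆ V with |X| ≤ k such that G − X is a uniform cluster graph satisfies s ∈ X. -/

import Mathlib

namespace Paper

/-- The graph `G - S` obtained from `G` by deleting the vertices of `S`: edges of `G`
with both endpoints outside `S` (vertices of `S` become isolated). -/
def restrictOutside {V : Type*} (G : SimpleGraph V) (S : Set V) : SimpleGraph V where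
  Adj x y := G.Adj x y ∧ x ∉ S ∧ y ∉ S
  symm := ⟨fun _ _ h => ⟨h.1.symm, h.2.2, h.2.1⟩⟩
  loopless := ⟨fun x h => G.loopless.irrefl x h.1⟩

/-- The vertex set of the connected component of `v` in `G`. -/
def compSet {V : Type*} (G : SimpleGraph V) (v : V) : Set V := {w | G.Reachable v w}

/-- A cluster graph: no induced `P₃`; equivalently, every connected component induces a clique. -/
def IsClusterGraph {V : Type*} (G : SimpleGraph V) : Prop :=
  ∀ ⦃x y z : V⦄, G.Adj x y → G.Adj y z → x ≠ z → G.Adj x z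

/-- `G - X` is a disjoint union of cliques each on exactly `c` vertices. -/
def IsUniformClusterDel {V : Type*} (G : SimpleGraph V) (X : Set V) (c : ℕ) : Prop :=
  ∀ w ∉ X, (restrictOutside G X).IsClique (compSet (restrictOutside G X) w) ∧
    (compSet (restrictOutside G X) w).ncard = c

/- If `s ∉ X`, the big component `B` of `G - S` leaves a clique of at least `7k` vertices in
`G - X`, so all components of `G - X`, in particular the clique `K ∋ s`, have at least `7k`
vertices. At least `4k` of them lie outside `S`, hence in one component `C` of `G - S`, and
they are neighbours of `s`; as `4k ≥ k + 1`, the hypothesis on `s` then forces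
`|N(s) ∩ C| < |C| - 4k`. But `C \ X` is a clique of `G - X` meeting `K`, so it lies in `K`
and consists of neighbours of `s`, giving `|N(s) ∩ C| ≥ |C| - k`. -/

open SimpleGraph

section
variable {V : Type*}

lemma mem_compSet_self (H : SimpleGraph V) (v : V) : v ∈ compSet H v :=
  Reachable.refl v

lemma compSet_eq_of_mem {H : SimpleGraph V} {v x : V} (hx : x ∈ compSet H v) :
    compSet H x = compSet H v := by
  ext y
  exact ⟨hx.trans, hx.symm.trans⟩

lemma subset_compSet_of_isClique {H : SimpleGraph V} {T : Set V} (hT : H.IsClique T) {t : V}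
    (ht : t ∈ T) : T ⊆ compSet H t := by
  intro x hx
  rcases eq_or_ne t x with rfl | hne
  · exact mem_compSet_self H t
  · exact (hT ht hx hne).reachable

lemma IsClusterGraph.adj_of_reachable {H : SimpleGraph V} (h : IsClusterGraph H) {x y : V}
    (hr : H.Reachable x y) (hne : x ≠ y) : H.Adj x y := by
  obtain ⟨p⟩ := hr
  induction p with
  | nil => exact absurd rfl hne
  | @cons x u y hxu p ih =>
    rcases eq_or_ne u y with rfl | huy
    · exact hxu
    · exact h hxu (ih huy) hne

lemma IsClusterGraph.isClique_compSet {H : SimpleGraph V} (h : IsClusterGraph H) (v : V) :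
    H.IsClique (compSet H v) :=
  fun x (hx : H.Reachable v x) y (hy : H.Reachable v y) hxy =>
    h.adj_of_reachable (hx.symm.trans hy) hxy

lemma restrictOutside_le (G : SimpleGraph V) (S : Set V) : restrictOutside G S ≤ G :=
  fun _ _ h => h.1

lemma isClique_sdiff_restrictOutside {G : SimpleGraph V} {T : Set V} (hT : G.IsClique T)
    (X : Set V) : (restrictOutside G X).IsClique (T \ X) :=
  fun _ hx _ hy hne => ⟨hT hx.1 hy.1 hne, hx.2, hy.2⟩

lemma notMem_of_mem_compSet_restrictOutside {G : SimpleGraph V} {S : Set V} {v x : V}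
    (hv : v ∉ S) (hx : x ∈ compSet (restrictOutside G S) v) : x ∉ S := by
  obtain ⟨p⟩ := (hx : (restrictOutside G S).Reachable v x).symm
  cases p with
  | nil => exact hv
  | cons hadj _ => exact hadj.2.1

lemma IsUniformClusterDel.compSet_sdiff_subset_neighborSet {G : SimpleGraph V} {X : Set V}
    {c : ℕ} (hX : IsUniformClusterDel G X c) {s : V} (hs : s ∉ X) :
    compSet (restrictOutside G X) s \ {s} ⊆ G.neighborSet s :=
  fun _ hx => ((hX s hs).1 (mem_compSet_self _ s) hx.1 (Ne.symm hx.2)).1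

lemma IsUniformClusterDel.ncard_sdiff_le [Finite V] {G : SimpleGraph V} {X : Set V} {c : ℕ}
    (hX : IsUniformClusterDel G X c) {T : Set V} (hT : G.IsClique T) {t : V} (ht : t ∈ T)
    (htX : t ∉ X) : (T \ X).ncard ≤ c :=
  (hX t htX).2 ▸ Set.ncard_le_ncard
    (subset_compSet_of_isClique (isClique_sdiff_restrictOutside hT X) ⟨ht, htX⟩)

end

/-- Suppose `k ≥ 1`, `|S| ≤ 3k`, `G - S` is a cluster graph, some connected component of
`G - S` has at least `8k` vertices, and `s ∈ S` has, in every connected component `C` of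
`G - S`, fewer than `max (|C| - 4k) (k + 1)` neighbors.  Then every `X` with `|X| ≤ k`
such that `G - X` is a uniform cluster graph contains `s`. -/
theorem stmt7 {V : Type*} [Fintype V] (G : SimpleGraph V) (k : ℕ) (hk : 1 ≤ k)
    (S : Set V) (hScard : S.ncard ≤ 3 * k)
    (hcluster : IsClusterGraph (restrictOutside G S))
    (hbig : ∃ w, w ∉ S ∧ 8 * k ≤ (compSet (restrictOutside G S) w).ncard)
    (s : V) (hsS : s ∈ S)
    (hlight : ∀ w, w ∉ S →
      (compSet (restrictOutside G S) w ∩ G.neighborSet s).ncard <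
        max ((compSet (restrictOutside G S) w).ncard - 4 * k) (k + 1))
    (X : Set V) (hXcard : X.ncard ≤ k)
    (hX : ∃ c, IsUniformClusterDel G X c) :
    s ∈ X := by
  by_contra hsX
  obtain ⟨c, hc⟩ := hX
  obtain ⟨w, hwS, hwbig⟩ := hbig
  have hcomp_clique (v : V) : G.IsClique (compSet (restrictOutside G S) v) :=
    (hcluster.isClique_compSet v).mono (restrictOutside_le G S)
  set K := compSet (restrictOutside G X) s
  have hc7 : 7 * k ≤ c := by
    have hBX := Set.le_ncard_sdiff X (compSet (restrictOutside G S) w)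
    obtain ⟨b, hbB, hbX⟩ :=
      Set.nonempty_of_ncard_ne_zero (by omega : (compSet (restrictOutside G S) w \ X).ncard ≠ 0)
    have := hc.ncard_sdiff_le (hcomp_clique w) hbB hbX
    omega
  have hKS : 4 * k ≤ (K \ S).ncard := by
    have := Set.le_ncard_sdiff S K
    have hKc : K.ncard = c := (hc s hsX).2
    omega
  obtain ⟨t, htK, htS⟩ := Set.nonempty_of_ncard_ne_zero (by omega : (K \ S).ncard ≠ 0)
  set C := compSet (restrictOutside G S) t
  have hKnbr := hc.compSet_sdiff_subset_neighborSet hsX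
  have hKS_sub : K \ S ⊆ C ∩ G.neighborSet s := by
    have hKS_C : K \ S ⊆ C := subset_compSet_of_isClique (isClique_sdiff_restrictOutside
      ((hc s hsX).1.mono (restrictOutside_le G X)) S) ⟨htK, htS⟩
    exact fun x hx => ⟨hKS_C hx, hKnbr ⟨hx.1, fun h => hx.2 (h ▸ hsS)⟩⟩
  have hCX_sub : C \ X ⊆ C ∩ G.neighborSet s := by
    have hCX_K : C \ X ⊆ K := by
      have htX := notMem_of_mem_compSet_restrictOutside hsX htK
      have := subset_compSet_of_isClique (isClique_sdiff_restrictOutside (hcomp_clique t) X)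
        ⟨mem_compSet_self _ t, htX⟩
      rwa [compSet_eq_of_mem htK] at this
    exact fun x hx => ⟨hx.1, hKnbr ⟨hCX_K hx, fun h =>
      notMem_of_mem_compSet_restrictOutside htS hx.1 (h ▸ hsS)⟩⟩
  have h1 := Set.ncard_le_ncard hKS_sub
  have h2 := Set.ncard_le_ncard hCX_sub
  have h3 := Set.le_ncard_sdiff X C
  have h4 : (C ∩ G.neighborSet s).ncard < max (C.ncard - 4 * k) (k + 1) := hlight t htS
  omega

end Paper
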